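/- arXiv:1903.10618 — 3 statements merged into one kernel-verified Lean document; each statement's English description precedes it below -/
import Mathlib

section
/- Let k ≥ 60. Let ε > 0 and 0 < α < 1 be real numbers such that 2^k(1−α)^{2k} > (1+ε)/ε and αn is an integer. Let m = (ln(2)·2^k − γ)·n for some real γ ∈ [0, ln(2)·2^k/4]. Let p_pos = exp(−(ln 2/(8(1+ε)^2))·(1−α)^{4k}·n), let c_s = ⌈n^2·2^n / C(n, αn)⌉, and let μ_pos = c_s·p_pos. Draw φ from D_R(m,n,k) and draw c_s assignments independently and uniformly at random from {0,1}^n. Then with probability at least 1 − p_pos − e^{−n·μ_pos/3}, the number of sampled assignments v with NumClausesSAT(φ, v) ≥ (1 − (1−(1−α)^{2k})/(2^k−1))·m is at most 2n·μ_pos. -/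
/-!
For a fixed assignment `v`, the clauses of a uniformly random formula are independent and each
is falsified by `v` with probability `2⁻ᵏ`. With `δ = (1 - α)^(2k)`, the threshold `T` lies the
fraction `s = (2ᵏδ - 1)/(2ᵏ - 1)` of the way from the mean `m(1 - 2⁻ᵏ)` to `m`, and the hypothesis
on `ε` gives `s ≥ δ/(1 + ε)`. A Chernoff lower-tail bound for the number of falsified clauses,
with `m/2ᵏ ≥ (3/4) n ln 2`, shows that `v` reaches `T` with probability at most `p_pos²`. Hence
the expected number of sampled assignments reaching `T` is at most `c_s p_pos² = p_pos μ_pos`, and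
Markov's inequality bounds the probability that more than `2n μ_pos` of them do by `p_pos/(2n)`.
-/
open scoped Classical
open Finset

/-- An assignment of `n` Boolean variables. -/
abbrev Assignment (n : ℕ) := Fin n → Bool

/-- A clause: an ordered `k`-tuple of literals, each a variable index together with a sign. -/
abbrev Clause (n k : ℕ) := Fin k → Fin n × Bool

/-- A formula: an ordered `m`-tuple of clauses. -/
abbrev Formula (n k m : ℕ) := Fin m → Clause n k

/-- An assignment satisfies a clause if it satisfies at least one literal of the clause. -/
def SatClause {n k : ℕ} (v : Assignment n) (c : Clause n k) : Prop :=
  ∃ i, v (c i).1 = (c i).2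

/-- An assignment satisfies a formula if it satisfies every clause. -/
def SatFormula {n k m : ℕ} (v : Assignment n) (φ : Formula n k m) : Prop :=
  ∀ j, SatClause v (φ j)

/-- The number of clauses of `φ` satisfied by `v`. -/
noncomputable def numSat {n k m : ℕ} (φ : Formula n k m) (v : Assignment n) : ℕ :=
  (Finset.univ.filter fun j => SatClause v (φ j)).card

/-- The number of clauses of `φ` left unsatisfied by `v`. -/
noncomputable def numUnsat {n k m : ℕ} (φ : Formula n k m) (v : Assignment n) : ℕ :=
  (Finset.univ.filter fun j => ¬ SatClause v (φ j)).card

open Fintype Real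

theorem Real.exp_neg_le_one_sub_add_sq_div_two {s : ℝ} (hs : 0 ≤ s) :
    exp (-s) ≤ 1 - s + s ^ 2 / 2 := by
  have hmono : Monotone fun x : ℝ => 1 - x + x ^ 2 / 2 - exp (-x) :=
    monotone_of_hasDerivAt_nonneg (f' := fun x => x - 1 + exp (-x))
      (fun x => ((((hasDerivAt_id' x).const_sub 1).add ((hasDerivAt_pow 2 x).div_const 2)).sub
          (hasDerivAt_neg' x).exp).congr_deriv (by ring))
      (fun x => by dsimp; linarith [add_one_le_exp (-x)])
  simpa using hmono hs

section Chernoff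

variable {C ι : Type*} [Fintype C] [Fintype ι] [DecidableEq ι] (p : C → Prop) [DecidablePred p]

theorem card_filter_count_le_le_exp_mul_pow {θ : ℝ} (L : ℝ) (hθ : 0 ≤ θ) :
    (#{f : ι → C | (#{i | p (f i)} : ℝ) ≤ L} : ℝ) ≤
      exp (θ * L) * (card C - (1 - exp (-θ)) * #{c | p c}) ^ card ι := by
  set g : C → ℝ := fun c => if p c then exp (-θ) else 1
  have hprod (f : ι → C) : ∏ i, g (f i) = exp (-θ * #{i | p (f i)}) := by
    simp only [g, prod_ite, prod_const, one_pow, mul_one, ← exp_nat_mul]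
    ring_nf
  have hsum : ∑ c, g c = card C - (1 - exp (-θ)) * #{c | p c} := by
    have hcard := card_filter_add_card_filter_not (s := univ) p
    rw [card_univ] at hcard
    simp only [g, sum_ite, sum_const, nsmul_eq_mul, mul_one, ← hcard]
    push_cast
    ring
  calc (#{f : ι → C | (#{i | p (f i)} : ℝ) ≤ L} : ℝ)
      = ∑ f : ι → C, if (#{i | p (f i)} : ℝ) ≤ L then 1 else 0 := natCast_card_filter _ _
    _ ≤ ∑ f : ι → C, exp (θ * L) * ∏ i, g (f i) := by
      refine sum_le_sum fun f _ => ?_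
      split_ifs with h
      · rw [hprod, ← exp_add]
        exact one_le_exp (by nlinarith)
      · positivity
    _ = exp (θ * L) * (∑ c, g c) ^ card ι := by
      rw [← mul_sum, ← Fintype.prod_sum, prod_const, card_univ]
    _ = _ := by rw [hsum]

theorem card_filter_count_le_le_exp {q s : ℝ} (hq0 : 0 ≤ q) (hq : (#{c | p c} : ℝ) = q * card C)
    (hs : 0 ≤ s) :
    (#{f : ι → C | (#{i | p (f i)} : ℝ) ≤ (1 - s) * q * card ι} : ℝ) ≤
      exp (-(s ^ 2 * q * card ι / 2)) * card C ^ card ι := by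
  have hbase_nonneg : 0 ≤ card C - (1 - exp (-s)) * #{c | p c} := by
    have hcard : (#{c | p c} : ℝ) ≤ card C := by
      exact_mod_cast (card_filter_le _ _).trans_eq card_univ
    nlinarith [exp_pos (-s), exp_le_one_iff.mpr (neg_nonpos.mpr hs)]
  have hbase_le :
      card C - (1 - exp (-s)) * #{c | p c} ≤ card C * exp (-(q * (1 - exp (-s)))) := by
    rw [hq]
    nlinarith [add_one_le_exp (-(q * (1 - exp (-s)))), Nat.cast_nonneg (α := ℝ) (card C)]
  have hquad : s - s ^ 2 / 2 ≤ 1 - exp (-s) := by linarith [exp_neg_le_one_sub_add_sq_div_two hs]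
  -- `θ = s` is not optimal, but with `exp (-s) ≤ 1 - s + s²/2` it already gives `-s²qm/2`.
  calc (#{f : ι → C | (#{i | p (f i)} : ℝ) ≤ (1 - s) * q * card ι} : ℝ)
      ≤ exp (s * ((1 - s) * q * card ι)) * (card C - (1 - exp (-s)) * #{c | p c}) ^ card ι :=
        card_filter_count_le_le_exp_mul_pow p _ hs
    _ ≤ exp (s * ((1 - s) * q * card ι)) * (card C * exp (-(q * (1 - exp (-s))))) ^ card ι := by
        gcongr
    _ = exp (s * ((1 - s) * q * card ι) - q * card ι * (1 - exp (-s))) * card C ^ card ι := by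
        rw [mul_pow, ← exp_nat_mul, mul_left_comm, ← exp_add, mul_comm]
        ring_nf
    _ ≤ exp (-(s ^ 2 * q * card ι / 2)) * card C ^ card ι := by
        gcongr
        nlinarith [mul_le_mul_of_nonneg_left hquad (by positivity : 0 ≤ q * card ι)]

end Chernoff

theorem card_filter_lt_mul_le_sum {α : Type*} (s : Finset α) {f : α → ℝ}
    (hf : ∀ x ∈ s, 0 ≤ f x) (a : ℝ) : #{x ∈ s | a < f x} * a ≤ ∑ x ∈ s, f x :=
  calc #{x ∈ s | a < f x} * a ≤ ∑ x ∈ s with a < f x, f x := by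
        rw [← nsmul_eq_mul]
        exact card_nsmul_le_sum _ _ _ fun x hx => (mem_filter.mp hx).2.le
    _ ≤ ∑ x ∈ s, f x := sum_le_sum_of_subset_of_nonneg (filter_subset _ _) fun x hx _ => hf x hx

theorem sum_card_filter_sample_le {Φ A ι : Type*} [Fintype Φ] [Fintype A] [Fintype ι]
    [DecidableEq ι] (Q : Φ → A → Prop) [∀ φ a, Decidable (Q φ a)] {r : ℝ}
    (h : ∀ a, (#{φ | Q φ a} : ℝ) ≤ r * card Φ) :
    ∑ x : Φ × (ι → A), (#{i | Q x.1 (x.2 i)} : ℝ) ≤ card ι * r * card (Φ × (ι → A)) := by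
  have hcoord (φ : Φ) : ∑ vs : ι → A, (#{i | Q φ (vs i)} : ℝ) =
      card ι * card A ^ (card ι - 1) * #{a | Q φ a} := by
    have happly (i : ι) : ∑ vs : ι → A, (if Q φ (vs i) then 1 else 0 : ℝ) =
        card A ^ (card ι - 1) * ∑ a, if Q φ a then 1 else 0 := by
      simpa using Fintype.sum_piFinset_apply (fun a => if Q φ a then (1 : ℝ) else 0) univ i
    simp only [natCast_card_filter]
    rw [sum_comm]
    simp only [happly, sum_const, card_univ, nsmul_eq_mul]
    ring
  have hpow : (card ι : ℝ) * card A ^ (card ι - 1) * card A = card ι * card (ι → A) := by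
    rcases (card ι).eq_zero_or_pos with h0 | hpos
    · simp [h0]
    · rw [Fintype.card_fun, mul_assoc, ← pow_succ, Nat.sub_add_cancel hpos]
      push_cast; rfl
  calc ∑ x : Φ × (ι → A), (#{i | Q x.1 (x.2 i)} : ℝ)
      = card ι * card A ^ (card ι - 1) * ∑ a, (#{φ | Q φ a} : ℝ) := by
        rw [Fintype.sum_prod_type]
        simp only [hcoord, ← mul_sum]
        congr 1
        simp only [natCast_card_filter]
        exact sum_comm
    _ ≤ card ι * card A ^ (card ι - 1) * ∑ _a : A, r * card Φ := by gcongr; exact h _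
    _ = card ι * r * card (Φ × (ι → A)) := by
        rw [sum_const, card_univ, nsmul_eq_mul, Fintype.card_prod]
        push_cast
        linear_combination r * card Φ * hpow

theorem one_sub_le_card_filter_sample_le_div {Φ A ι : Type*} [Fintype Φ] [Fintype A]
    [Fintype ι] [DecidableEq ι] [Nonempty Φ] [Nonempty A] (Q : Φ → A → Prop)
    [∀ φ a, Decidable (Q φ a)] {r b : ℝ} (hr : 0 < r) (hb : 0 ≤ b)
    (h : ∀ a, (#{φ | Q φ a} : ℝ) ≤ r * b * card Φ) :
    1 - b ≤ (#{x : Φ × (ι → A) | (#{i | Q x.1 (x.2 i)} : ℝ) ≤ card ι * r} : ℝ) /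
      card (Φ × (ι → A)) := by
  set X : Φ × (ι → A) → ℝ := fun x => #{i | Q x.1 (x.2 i)}
  have hbad : (#{x | card ι * r < X x} : ℝ) ≤ b * card (Φ × (ι → A)) := by
    rcases (card ι).eq_zero_or_pos with hι | hι
    · have hX (x : Φ × (ι → A)) : X x ≤ 0 := by
        simpa [X, hι] using card_filter_le univ fun i => Q x.1 (x.2 i)
      rw [filter_false_of_mem fun x _ => by simp [hι, hX x]]
      simp only [Finset.card_empty, CharP.cast_eq_zero]
      positivity
    · refine le_of_mul_le_mul_right ?_ (by positivity : (0 : ℝ) < card ι * r)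
      calc (#{x | card ι * r < X x} : ℝ) * (card ι * r)
          ≤ ∑ x, X x := card_filter_lt_mul_le_sum univ (fun _ _ => Nat.cast_nonneg _) _
        _ ≤ card ι * (r * b) * card (Φ × (ι → A)) := sum_card_filter_sample_le Q h
        _ = b * card (Φ × (ι → A)) * (card ι * r) := by ring
  have hsplit : (#{x | X x ≤ card ι * r} : ℝ) + #{x | card ι * r < X x} =
      card (Φ × (ι → A)) := by
    have h := card_filter_add_card_filter_not (s := univ) fun x => X x ≤ card ι * r
    simp only [not_le, card_univ] at h
    exact_mod_cast h
  rw [le_div_iff₀ (by exact_mod_cast Fintype.card_pos)]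
  linarith

theorem div_one_add_le_div_sub_one {P δ ε : ℝ} (hP : 1 < P) (hδ : 0 ≤ δ) (hε : 0 < ε)
    (h : (1 + ε) / ε < P * δ) : δ / (1 + ε) ≤ (P * δ - 1) / (P - 1) := by
  rw [div_le_div_iff₀ (by linarith) (by linarith)]
  rw [div_lt_iff₀ hε] at h
  nlinarith

theorem log_two_mul_sq_le_chernoff_exponent {P δ ε γ m n : ℝ} (hP : 1 < P) (hδ : 0 ≤ δ)
    (hε : 0 < ε) (hcond : (1 + ε) / ε < P * δ) (hγ : γ ≤ log 2 * P / 4)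
    (hm : m = (log 2 * P - γ) * n) (hn : 0 ≤ n) :
    2 * (log 2 / (8 * (1 + ε) ^ 2) * δ ^ 2 * n) ≤ ((P * δ - 1) / (P - 1)) ^ 2 * m / (2 * P) := by
  have hsq : (δ / (1 + ε)) ^ 2 ≤ ((P * δ - 1) / (P - 1)) ^ 2 :=
    pow_le_pow_left₀ (by positivity) (div_one_add_le_div_sub_one hP hδ hε hcond) 2
  have hM : 3 / 4 * log 2 * n ≤ m / P := by
    rw [le_div_iff₀ (by linarith), hm]
    nlinarith [log_pos one_lt_two]
  calc 2 * (log 2 / (8 * (1 + ε) ^ 2) * δ ^ 2 * n) = (δ / (1 + ε)) ^ 2 * (log 2 * n / 4) := by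
        field_simp
        ring
    _ ≤ ((P * δ - 1) / (P - 1)) ^ 2 * (m / P / 2) := by
        refine mul_le_mul hsq ?_ (by positivity) (by positivity)
        nlinarith [log_pos one_lt_two]
    _ = ((P * δ - 1) / (P - 1)) ^ 2 * m / (2 * P) := by ring

section RandomFormula

variable {n k m : ℕ}

theorem card_literal_not_sat (v : Assignment n) : #{l : Fin n × Bool | v l.1 ≠ l.2} = n := by
  rw [card_filter, Fintype.sum_prod_type]
  have hfiber (x : Fin n) : (∑ b : Bool, if v x ≠ b then 1 else 0) = 1 := by
    cases v x <;> rfl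
  simp only [hfiber, sum_const, card_univ, Fintype.card_fin, smul_eq_mul, mul_one]

theorem card_clause_not_satClause (v : Assignment n) :
    #{c : Clause n k | ¬ SatClause v c} = n ^ k := by
  have : ({c : Clause n k | ¬ SatClause v c} : Finset _) =
      piFinset fun _ => {l : Fin n × Bool | v l.1 ≠ l.2} := by
    ext c; simp [SatClause]
  rw [this, card_piFinset, prod_const, card_literal_not_sat, card_univ, Fintype.card_fin]

theorem card_clause : card (Clause n k) = (2 * n) ^ k := by
  simp [mul_comm]

theorem numSat_add_numUnsat (φ : Formula n k m) (v : Assignment n) :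
    numSat φ v + numUnsat φ v = m := by
  rw [numSat, numUnsat, card_filter_add_card_filter_not, card_univ, Fintype.card_fin]

theorem card_filter_numSat_ge_le (v : Assignment n) {s : ℝ} (hs : 0 ≤ s) :
    (#{φ : Formula n k m | (1 - (1 - s) / 2 ^ k) * m ≤ numSat φ v} : ℝ) ≤
      exp (-(s ^ 2 * m / (2 * 2 ^ k))) * card (Formula n k m) := by
  have hfilter : #{φ : Formula n k m | (1 - (1 - s) / 2 ^ k) * m ≤ numSat φ v} =
      #{φ : Formula n k m |
        (#{j : Fin m | ¬ SatClause v (φ j)} : ℝ) ≤ (1 - s) * (1 / 2 ^ k) * card (Fin m)} := by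
    refine congrArg card (filter_congr fun φ _ => ?_)
    have hsum : (numSat φ v : ℝ) + numUnsat φ v = m := by exact_mod_cast numSat_add_numUnsat φ v
    have hthreshold : (1 - (1 - s) / 2 ^ k) * m = m - (1 - s) * (1 / 2 ^ k) * m := by ring
    rw [numUnsat] at hsum
    rw [Fintype.card_fin, hthreshold]
    constructor <;> intro h <;> linarith
  have hq : (#{c : Clause n k | ¬ SatClause v c} : ℝ) = 1 / 2 ^ k * card (Clause n k) := by
    rw [card_clause_not_satClause, card_clause]
    push_cast
    field_simp
    ring
  rw [hfilter]
  refine (card_filter_count_le_le_exp (fun c => ¬ SatClause v c) (by positivity) hq hs).trans_eq ?_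
  rw [Fintype.card_fin]
  congr 1
  · ring_nf
  · simp

theorem card_filter_numSat_ge_threshold_le (hk : k ≠ 0) {ε α γ : ℝ} (hε : 0 < ε)
    (hcond : (1 + ε) / ε < 2 ^ k * (1 - α) ^ (2 * k)) (hγ : γ ≤ log 2 * 2 ^ k / 4)
    (hm : (m : ℝ) = (log 2 * 2 ^ k - γ) * n) (v : Assignment n) :
    (#{φ : Formula n k m | (1 - (1 - (1 - α) ^ (2 * k)) / (2 ^ k - 1)) * m ≤ numSat φ v} : ℝ) ≤
      exp (-(log 2 / (8 * (1 + ε) ^ 2)) * (1 - α) ^ (4 * k) * n) ^ 2 *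
        card (Formula n k m) := by
  set δ : ℝ := (1 - α) ^ (2 * k) with hδ_def
  set s : ℝ := (2 ^ k * δ - 1) / (2 ^ k - 1)
  have hP : (1 : ℝ) < 2 ^ k := one_lt_pow₀ one_lt_two hk
  have hδ : 0 ≤ δ := (even_two_mul k).pow_nonneg _
  have hs : 0 ≤ s := (by positivity : 0 ≤ δ / (1 + ε)).trans
    (div_one_add_le_div_sub_one hP hδ hε hcond)
  have hthreshold : (1 - (1 - δ) / (2 ^ k - 1)) * m = (1 - (1 - s) / 2 ^ k) * m := by
    have hP1 : (2 : ℝ) ^ k - 1 ≠ 0 := by linarith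
    simp only [s]
    field_simp
    ring
  have hexponent : 2 * (log 2 / (8 * (1 + ε) ^ 2) * δ ^ 2 * n) ≤ s ^ 2 * m / (2 * 2 ^ k) :=
    log_two_mul_sq_le_chernoff_exponent hP hδ hε hcond hγ hm (Nat.cast_nonneg n)
  have h4k : (1 - α) ^ (4 * k) = δ ^ 2 := by rw [hδ_def, ← pow_mul]; ring_nf
  rw [hthreshold, h4k, ← exp_nat_mul]
  refine (card_filter_numSat_ge_le v hs).trans (by gcongr; push_cast; linarith)

end RandomFormula

theorem sampled_positives_bound_general (n k m : ℕ) (hn : 0 < n) (hk : 60 ≤ k)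
    (ε α : ℝ) (hε : 0 < ε)
    (hcond : 2 ^ k * (1 - α) ^ (2 * k) > (1 + ε) / ε)
    (t : ℕ)
    (γ : ℝ) (hγ1 : γ ≤ Real.log 2 * 2 ^ k / 4)
    (hmval : (m : ℝ) = (Real.log 2 * 2 ^ k - γ) * n) :
    let T : ℝ := (1 - (1 - (1 - α) ^ (2 * k)) / (2 ^ k - 1)) * m
    let ppos : ℝ := Real.exp (-(Real.log 2 / (8 * (1 + ε) ^ 2)) * (1 - α) ^ (4 * k) * n)
    let cs : ℕ := ⌈((n : ℝ) ^ 2 * 2 ^ n) / (n.choose t : ℝ)⌉₊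
    let μpos : ℝ := cs * ppos
    (((univ : Finset (Formula n k m × (Fin cs → Assignment n))).filter fun p =>
        (((univ : Finset (Fin cs)).filter fun i =>
            T ≤ (numSat p.1 (p.2 i) : ℝ)).card : ℝ) ≤ 2 * n * μpos).card : ℝ)
      / (Fintype.card (Formula n k m × (Fin cs → Assignment n)) : ℝ)
      ≥ 1 - ppos - Real.exp (-(n : ℝ) * μpos / 3) := by
  intro T ppos cs μpos
  have : NeZero n := ⟨hn.ne'⟩
  have hppos : 0 < ppos := exp_pos _
  have hn2 : (1 : ℝ) ≤ 2 * n := by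
    have : (1 : ℝ) ≤ n := by exact_mod_cast hn
    linarith
  have hpositive (v : Assignment n) : (#{φ : Formula n k m | T ≤ numSat φ v} : ℝ) ≤
      2 * n * ppos * (ppos / (2 * n)) * card (Formula n k m) := by
    rw [show 2 * n * ppos * (ppos / (2 * n)) = ppos ^ 2 by field_simp]
    exact card_filter_numSat_ge_threshold_le (by omega) hε hcond hγ1 hmval v
  have hsample := one_sub_le_card_filter_sample_le_div (ι := Fin cs)
    (fun φ v => T ≤ numSat φ v) (by positivity) (by positivity) hpositive
  have hthreshold : (card (Fin cs) : ℝ) * (2 * n * ppos) = 2 * n * μpos := by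
    simp only [μpos, Fintype.card_fin]
    ring
  rw [hthreshold] at hsample
  have hppos_div : ppos / (2 * n) ≤ ppos := div_le_self hppos.le hn2
  exact le_trans (by linarith [exp_pos (-(n : ℝ) * μpos / 3)]) hsample

/-- Under the hypotheses of Statement 2 (with `αn = t` an integer), let
`p_pos = exp(−(ln 2/(8(1+ε)²))(1−α)^{4k} n)`, `c_s = ⌈n²2ⁿ/C(n,αn)⌉`, `μ_pos = c_s·p_pos`.
Draw `φ` uniformly among formulas with `m` clauses and draw `c_s` assignments i.i.d. uniformly.
Then with probability at least `1 − p_pos − e^{−n μ_pos/3}`, the number of sampled assignments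
`v` with `NumClausesSAT(φ,v) ≥ (1−(1−(1−α)^{2k})/(2^k−1))m` is at most `2n·μ_pos`. -/
theorem sampled_positives_bound (n k m : ℕ) (hn : 0 < n) (hk : 60 ≤ k) (hm : 0 < m)
    (ε α : ℝ) (hε : 0 < ε) (hα0 : 0 < α) (hα1 : α < 1)
    (hcond : 2 ^ k * (1 - α) ^ (2 * k) > (1 + ε) / ε)
    (t : ℕ) (ht : (t : ℝ) = α * n)
    (γ : ℝ) (hγ0 : 0 ≤ γ) (hγ1 : γ ≤ Real.log 2 * 2 ^ k / 4)
    (hmval : (m : ℝ) = (Real.log 2 * 2 ^ k - γ) * n) :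
    let T : ℝ := (1 - (1 - (1 - α) ^ (2 * k)) / (2 ^ k - 1)) * m
    let ppos : ℝ := Real.exp (-(Real.log 2 / (8 * (1 + ε) ^ 2)) * (1 - α) ^ (4 * k) * n)
    let cs : ℕ := ⌈((n : ℝ) ^ 2 * 2 ^ n) / (n.choose t : ℝ)⌉₊
    let μpos : ℝ := cs * ppos
    (((univ : Finset (Formula n k m × (Fin cs → Assignment n))).filter fun p =>
        (((univ : Finset (Fin cs)).filter fun i =>
            T ≤ (numSat p.1 (p.2 i) : ℝ)).card : ℝ) ≤ 2 * n * μpos).card : ℝ)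
      / (Fintype.card (Formula n k m × (Fin cs → Assignment n)) : ℝ)
      ≥ 1 - ppos - Real.exp (-(n : ℝ) * μpos / 3) :=
  sampled_positives_bound_general n k m hn hk ε α hε hcond t γ hγ1 hmval
end

section
/- Let 0 < c < 1/8 be a constant and let ε > 0 be a constant. There exists k₀ such that for all integers k ≥ k₀ the following holds whenever 2^k(1−α)^{2k} > (1+ε)/ε, where α = c·log₂(k)/k and αn is a positive integer: for m = (ln(2)·2^k − γ)·n with γ ∈ [0, ln(2)·2^k/4], if φ is drawn from D_R(m,n,k) and c_s = ⌈n^2·2^n / C(n, αn)⌉ assignments are drawn independently and uniformly at random from {0,1}^n, then with probability at least 1 − 2·2^{−n/(8(1+ε)^2·k^{8c})}, the number of sampled assignments v with NumClausesSAT(φ, v) ≥ (1 − (1−(1−α)^{2k})/(2^k−1))·m is at most 4n^3·2^n/(C(n, αn)·k^{αn}). -/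
/-!
Fix an assignment `v`. A uniform random clause is violated by `v` with probability `2⁻ᵏ`, so the
number of clauses of `φ` violated by `v` is binomial with mean `μ = m / 2ᵏ`, and `v` reaches the
threshold `T` exactly when at most `(1 - δ) μ` clauses are violated, for
`δ = (2ᵏ (1 - α)^{2k} - 1) / (2ᵏ - 1)`. The exponential-moment (Chernoff) bound for the lower tail
shows this happens for at most a fraction `exp (-μ δ² / 4)` of all formulas. By linearity of
expectation the `cs` samples contain on average at most `cs · exp (-μ δ² / 4)` such assignments,
and Markov's inequality bounds the probability of exceeding the bound `B` of the theorem by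
`cs · exp (-μ δ² / 4) / B`. Finally `μ ≥ (3/4) n ln 2`, `δ² ≥ ((1 + ε)² k^{8c})⁻¹` because
`(1 - α)^{4k} ≥ k^{-8c}`, and the factor `k^t = exp (t ln k)` in `B` is negligible since
`t ln k = c n (ln k)² / (k ln 2)` and `(ln k)² k^{8c} = o(k)` as `8c < 1`; this is what fixes `k₀`.
-/

open scoped Classical
open Finset

open Real Filter

theorem Finset.mul_card_filter_le_sum {α : Type*} (s : Finset α) {g : α → ℝ}
    (hg : ∀ x ∈ s, 0 ≤ g x) (a : ℝ) :
    a * #{x ∈ s | a ≤ g x} ≤ ∑ x ∈ s, g x := by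
  calc a * #{x ∈ s | a ≤ g x} ≤ ∑ x ∈ s with a ≤ g x, g x := by
        simpa [mul_comm] using card_nsmul_le_sum _ g a fun x hx => (mem_filter.1 hx).2
    _ ≤ ∑ x ∈ s, g x :=
        sum_le_sum_of_subset_of_nonneg (filter_subset _ _) fun x hx _ => hg x hx

theorem rpow_neg_mul_exp_le {δ μ : ℝ} (hδ0 : 0 < δ) (hδ1 : δ < 1) (hμ : 0 ≤ μ) :
    (1 - δ / 2) ^ (-((1 - δ) * μ)) * exp (-(δ / 2 * μ)) ≤ exp (-(μ * δ ^ 2 / 4)) := by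
  have hx : 0 < 1 - δ / 2 := by linarith
  have hlog : -(δ / 2) ≤ (1 - δ / 2) * log (1 - δ / 2) := by
    have h := mul_le_mul_of_nonneg_left (one_sub_inv_le_log_of_pos hx) hx.le
    rw [mul_sub, mul_one, mul_inv_cancel₀ hx.ne'] at h
    linarith
  rw [rpow_def_of_pos hx, ← exp_add, exp_le_exp]
  nlinarith [mul_nonneg (mul_nonneg hμ (by linarith : (0:ℝ) ≤ 1 - δ)) (sq_nonneg δ),
    mul_le_mul_of_nonneg_left hlog (mul_nonneg hμ (by linarith : (0:ℝ) ≤ 1 - δ)),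
    mul_nonneg hμ (pow_nonneg hδ0.le 3)]

section RandomFunctions

variable {ι α : Type*} [Fintype ι] [DecidableEq ι] [Fintype α]

theorem sum_pow_card_filter_apply (p : α → Prop) [DecidablePred p] (l : ℝ) :
    ∑ f : ι → α, l ^ #{i | p (f i)}
      = (Fintype.card α - (1 - l) * #{a | p a}) ^ Fintype.card ι := by
  have hsum : ∑ a, (if p a then l else 1) = (Fintype.card α - (1 - l) * #{a | p a} : ℝ) := by
    rw [sum_ite, sum_const, sum_const, ← card_univ (α := α),
      ← card_filter_add_card_filter_not (s := univ) p]
    simp only [nsmul_eq_mul, Nat.cast_add]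
    ring
  rw [← hsum, ← card_univ, ← prod_const, Fintype.prod_sum]
  refine sum_congr rfl fun f _ => ?_
  rw [← prod_filter, prod_const]

theorem sum_pow_card_filter_apply_le_exp (p : α → Prop) [DecidablePred p] {q l : ℝ}
    (hq : (#{a | p a} : ℝ) = q * Fintype.card α) (hq1 : q ≤ 1)
    (hl0 : 0 ≤ l) (hl1 : l ≤ 1) :
    ∑ f : ι → α, l ^ #{i | p (f i)}
      ≤ (Fintype.card α : ℝ) ^ Fintype.card ι * exp (-((1 - l) * (Fintype.card ι * q))) := by
  rw [sum_pow_card_filter_apply, hq]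
  calc ((Fintype.card α : ℝ) - (1 - l) * (q * Fintype.card α)) ^ Fintype.card ι
      = (Fintype.card α : ℝ) ^ Fintype.card ι * (1 - (1 - l) * q) ^ Fintype.card ι := by
        rw [← mul_pow]; ring_nf
    _ ≤ (Fintype.card α : ℝ) ^ Fintype.card ι * exp (-((1 - l) * q)) ^ Fintype.card ι := by
        gcongr
        · nlinarith
        · exact one_sub_le_exp_neg _
    _ = (Fintype.card α : ℝ) ^ Fintype.card ι * exp (-((1 - l) * (Fintype.card ι * q))) := by
        rw [← exp_nat_mul]; ring_nf

theorem card_lower_tail_le_exp [Nonempty α] (p : α → Prop) [DecidablePred p] {q δ : ℝ}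
    (hq : (#{a | p a} : ℝ) = q * Fintype.card α) (hδ0 : 0 < δ) (hδ1 : δ < 1) :
    (#{f : ι → α | (#{i | p (f i)} : ℝ) ≤ (1 - δ) * (Fintype.card ι * q)} : ℝ)
      ≤ exp (-(Fintype.card ι * q * δ ^ 2 / 4)) * Fintype.card (ι → α) := by
  set N := Fintype.card ι
  set A : ℝ := (Fintype.card α : ℝ)
  have hA : 0 < A := Nat.cast_pos.2 Fintype.card_pos
  have hq0 : 0 ≤ q := nonneg_of_mul_nonneg_left (hq ▸ Nat.cast_nonneg _) hA
  have hq1 : q ≤ 1 :=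
    le_of_mul_le_mul_right (by rw [one_mul, ← hq]; exact Nat.cast_le.2 (card_le_univ _)) hA
  set s : ℝ := (1 - δ) * (N * q)
  set l : ℝ := 1 - δ / 2 with hl
  have hl0 : 0 < l := by linarith
  -- Markov's inequality for the exponential moment `∑ f, l ^ X f` of `X f = #{i | p (f i)}`
  have hmarkov : l ^ s * #{f : ι → α | (#{i | p (f i)} : ℝ) ≤ s}
      ≤ ∑ f : ι → α, l ^ #{i | p (f i)} := by
    refine le_trans (mul_le_mul_of_nonneg_left ?_ (rpow_nonneg hl0.le s))
      (mul_card_filter_le_sum _ (fun f _ => pow_nonneg hl0.le _) (l ^ s))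
    refine Nat.cast_le.2 (card_le_card fun f hf => ?_)
    simp only [mem_filter, mem_univ, true_and] at hf ⊢
    rw [← rpow_natCast]
    exact rpow_le_rpow_of_exponent_ge hl0 (by linarith) hf
  have hmgf := sum_pow_card_filter_apply_le_exp (ι := ι) p hq hq1 hl0.le (by linarith)
  rw [show 1 - l = δ / 2 by ring] at hmgf
  calc (#{f : ι → α | (#{i | p (f i)} : ℝ) ≤ s} : ℝ)
      = l ^ (-s) * (l ^ s * #{f : ι → α | (#{i | p (f i)} : ℝ) ≤ s}) := by
        rw [← mul_assoc, ← rpow_add hl0, neg_add_cancel, rpow_zero, one_mul]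
    _ ≤ l ^ (-s) * (A ^ N * exp (-(δ / 2 * (N * q)))) :=
        mul_le_mul_of_nonneg_left (hmarkov.trans hmgf) (rpow_nonneg hl0.le _)
    _ = A ^ N * (l ^ (-s) * exp (-(δ / 2 * (N * q)))) := by ring
    _ ≤ A ^ N * exp (-(N * q * δ ^ 2 / 4)) := by
        gcongr
        exact rpow_neg_mul_exp_le hδ0 hδ1 (by positivity)
    _ = exp (-(N * q * δ ^ 2 / 4)) * Fintype.card (ι → α) := by
        rw [Fintype.card_fun]; push_cast; ring

theorem sum_card_filter_apply (p : α → Prop) [DecidablePred p] :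
    ∑ f : ι → α, #{i | p (f i)}
      = Fintype.card ι * #{a | p a} * Fintype.card α ^ (Fintype.card ι - 1) := by
  have hfiber (i : ι) :
      #{f : ι → α | p (f i)} = #{a | p a} * Fintype.card α ^ (Fintype.card ι - 1) := by
    rw [card_eq_sum_card_fiberwise (f := fun f => f i) (t := univ.filter p)
      (fun f hf => by simpa using hf), ← smul_eq_mul, ← sum_const]
    refine sum_congr rfl fun a ha => ?_
    rw [← card_univ (α := α),
      ← Fintype.card_filter_piFinset_const_eq_of_mem univ i (mem_univ a),
      Fintype.piFinset_univ, filter_filter]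
    congr 1
    ext f
    simp only [mem_filter, mem_univ, true_and, and_iff_right_iff_imp]
    rintro rfl
    simpa using ha
  simp_rw [card_filter]
  rw [sum_comm]
  simp_rw [← card_filter, hfiber, sum_const, card_univ, smul_eq_mul, mul_assoc]

theorem sum_card_filter_prod_apply_le {Ω : Type*} [Fintype Ω]
    (P : Ω → α → Prop) [∀ ω a, Decidable (P ω a)] {p : ℝ}
    (hP : ∀ a, (#{ω | P ω a} : ℝ) ≤ p * Fintype.card Ω) :
    ∑ x : Ω × (ι → α), (#{i | P x.1 (x.2 i)} : ℝ)
      ≤ Fintype.card ι * p * Fintype.card (Ω × (ι → α)) := by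
  have hswap : ∑ ω, #{a | P ω a} = ∑ a, #{ω | P ω a} := by
    simp only [card_filter]
    exact sum_comm
  have hsum : ∑ x : Ω × (ι → α), #{i | P x.1 (x.2 i)}
      = Fintype.card ι * Fintype.card α ^ (Fintype.card ι - 1) * ∑ a, #{ω | P ω a} := by
    rw [Fintype.sum_prod_type, ← hswap, mul_sum]
    exact sum_congr rfl fun ω _ => (sum_card_filter_apply (P ω)).trans (by ring)
  have hP' : (∑ a, #{ω | P ω a} : ℝ) ≤ Fintype.card α * (p * Fintype.card Ω) := by
    simpa using sum_le_sum fun a (_ : a ∈ univ) => hP a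
  rw [← Nat.cast_sum, hsum, Fintype.card_prod, Fintype.card_fun]
  push_cast
  rcases (Fintype.card ι).eq_zero_or_pos with hN | hN
  · simp [hN]
  calc (Fintype.card ι : ℝ) * (Fintype.card α : ℝ) ^ (Fintype.card ι - 1)
        * ∑ a, (#{ω | P ω a} : ℝ)
      ≤ Fintype.card ι * (Fintype.card α : ℝ) ^ (Fintype.card ι - 1)
        * (Fintype.card α * (p * Fintype.card Ω)) := by
        gcongr
    _ = Fintype.card ι * p * (Fintype.card Ω * (Fintype.card α : ℝ) ^ Fintype.card ι) := by
        rw [← pow_sub_one_mul hN.ne']; ring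

theorem le_card_filter_card_filter_le {Ω : Type*} [Fintype Ω]
    (P : Ω → α → Prop) [∀ ω a, Decidable (P ω a)] {p B : ℝ} (hB : 0 < B)
    (hP : ∀ a, (#{ω | P ω a} : ℝ) ≤ p * Fintype.card Ω) :
    (1 - Fintype.card ι * p / B) * Fintype.card (Ω × (ι → α))
      ≤ #{x : Ω × (ι → α) | (#{i | P x.1 (x.2 i)} : ℝ) ≤ B} := by
  set X : Ω × (ι → α) → ℝ := fun x => #{i | P x.1 (x.2 i)}
  set M : ℝ := (Fintype.card (Ω × (ι → α)) : ℝ)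
  have hmarkov : B * #{x | ¬ X x ≤ B} ≤ ∑ x, X x :=
    (mul_le_mul_of_nonneg_left (Nat.cast_le.2 (card_le_card fun x hx => by
      simp only [mem_filter, mem_univ, true_and, not_le] at hx ⊢; exact hx.le)) hB.le).trans
      (mul_card_filter_le_sum _ (fun x _ => Nat.cast_nonneg _) B)
  have hsplit : (#{x | X x ≤ B} : ℝ) + #{x | ¬ X x ≤ B} = M := by
    rw [← Nat.cast_add, card_filter_add_card_filter_not, card_univ]
  have hbad : (#{x | ¬ X x ≤ B} : ℝ) ≤ Fintype.card ι * p * M / B := by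
    rw [le_div_iff₀ hB]
    linarith [sum_card_filter_prod_apply_le (ι := ι) P hP]
  calc (1 - Fintype.card ι * p / B) * M = M - Fintype.card ι * p * M / B := by ring
    _ ≤ #{x | X x ≤ B} := by linarith

end RandomFunctions

theorem card_filter_not_satClause (n k : ℕ) (v : Assignment n) :
    #{cl : Clause n k | ¬ SatClause v cl} = n ^ k := by
  set L : Finset (Fin n × Bool) := {ℓ | v ℓ.1 ≠ ℓ.2}
  have hL : #L = n := by
    rw [card_filter, Fintype.sum_prod_type]
    conv_rhs => rw [← Fintype.card_fin n, ← card_univ, card_eq_sum_ones]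
    refine sum_congr rfl fun x _ => ?_
    cases h : v x <;> simp [h]
  calc #{cl : Clause n k | ¬ SatClause v cl} = #(Fintype.piFinset fun _ : Fin k => L) := by
        congr 1
        ext cl
        simp [SatClause, L]
    _ = n ^ k := by rw [Fintype.card_piFinset, prod_const, card_univ, Fintype.card_fin, hL]

theorem card_numSat_ge_le_exp {n k m : ℕ} (hn : 0 < n) (v : Assignment n) {δ : ℝ}
    (hδ0 : 0 < δ) (hδ1 : δ < 1) :
    (#{φ : Formula n k m | (m : ℝ) - (1 - δ) * (m / 2 ^ k) ≤ numSat φ v} : ℝ)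
      ≤ exp (-(m / 2 ^ k * δ ^ 2 / 4)) * Fintype.card (Formula n k m) := by
  have : Nonempty (Clause n k) := ⟨fun _ => (⟨0, hn⟩, true)⟩
  have hq : (#{cl : Clause n k | ¬ SatClause v cl} : ℝ)
      = 1 / 2 ^ k * Fintype.card (Clause n k) := by
    rw [card_filter_not_satClause, Fintype.card_fun, Fintype.card_prod, Fintype.card_fin,
      Fintype.card_fin, Fintype.card_bool]
    push_cast
    rw [mul_pow]
    field_simp
  have hsplit (φ : Formula n k m) : (numSat φ v : ℝ) + numUnsat φ v = m := by
    rw [numSat, numUnsat]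
    exact_mod_cast (card_filter_add_card_filter_not _).trans (by simp)
  have h := card_lower_tail_le_exp (ι := Fin m) (fun cl => ¬ SatClause v cl) hq hδ0 hδ1
  rw [Fintype.card_fin, mul_one_div] at h
  convert h using 3
  ext φ
  simp only [mem_filter, mem_univ, true_and]
  have := hsplit φ
  rw [numUnsat] at this
  constructor <;> intro <;> linarith

theorem eventually_mul_log_sq_mul_rpow_le {C a : ℝ} (hC : 0 < C) (ha : a < 1) :
    ∀ᶠ x : ℝ in atTop, C * log x ^ 2 * x ^ a ≤ x := by
  have h := ((isLittleO_log_rpow_atTop (r := (1 - a) / 2) (by linarith)).pow two_pos).bound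
    (inv_pos.2 hC)
  filter_upwards [h, eventually_gt_atTop 0] with x hx hx0
  rw [norm_pow, norm_pow, Real.norm_eq_abs, sq_abs, Real.norm_of_nonneg (rpow_nonneg hx0.le _),
    ← rpow_mul_natCast hx0.le] at hx
  calc C * log x ^ 2 * x ^ a ≤ C * (C⁻¹ * x ^ ((1 - a) / 2 * (2 : ℕ))) * x ^ a := by gcongr
    _ = x := by
      rw [← mul_assoc, mul_inv_cancel₀ hC.ne', one_mul, ← rpow_add hx0]
      norm_num

theorem logb_two_le_self (k : ℕ) : logb 2 k ≤ k := by
  rcases k.eq_zero_or_pos with rfl | hk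
  · simp
  rw [logb, div_le_iff₀ (log_pos one_lt_two), ← log_pow]
  exact log_le_log (by positivity) (by exact_mod_cast Nat.lt_two_pow_self.le)

theorem rpow_neg_le_one_sub_pow {k : ℕ} (hk : 0 < k) {c α : ℝ} (hc : 0 ≤ c)
    (hα : α = c * logb 2 k / k) (hα0 : 0 ≤ α) (hα1 : α ≤ 1 / 8) :
    (k : ℝ) ^ (-(8 * c)) ≤ (1 - α) ^ (4 * k) := by
  -- `-log (1 - α) ≤ α / (1 - α) ≤ 8α/7`, and `4k · 8α/7 = (32/7) c log₂ k ≤ 8c ln k`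
  have hk' : (0 : ℝ) < k := by exact_mod_cast hk
  have h1α : 0 < 1 - α := by linarith
  have hlog : -(8 / 7 * α) ≤ log (1 - α) := by
    have h := mul_le_mul_of_nonneg_left (one_sub_inv_le_log_of_pos h1α) h1α.le
    rw [mul_sub, mul_one, mul_inv_cancel₀ h1α.ne'] at h
    nlinarith
  have hkα : α * k * log 2 = c * log k := by
    rw [hα, logb]; field_simp
  have hlog2 : 4 / 7 < log 2 := by linarith [log_two_gt_d9]
  rw [← exp_log (pow_pos h1α _), rpow_def_of_pos hk', exp_le_exp, log_pow]
  push_cast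
  nlinarith [mul_le_mul_of_nonneg_left hlog (by positivity : (0 : ℝ) ≤ 4 * k),
    mul_nonneg hc (log_nonneg (by exact_mod_cast hk : (1 : ℝ) ≤ k)), mul_nonneg hα0 hk'.le]

noncomputable def thresholdDeviation (k : ℕ) (α : ℝ) : ℝ :=
  (2 ^ k * (1 - α) ^ (2 * k) - 1) / (2 ^ k - 1)

theorem threshold_eq {k : ℕ} (hk : k ≠ 0) (α m : ℝ) :
    (1 - (1 - (1 - α) ^ (2 * k)) / (2 ^ k - 1)) * m
      = m - (1 - thresholdDeviation k α) * (m / 2 ^ k) := by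
  have : (2 : ℝ) ^ k - 1 ≠ 0 := (sub_pos.2 (one_lt_pow₀ one_lt_two hk)).ne'
  rw [thresholdDeviation]
  field_simp
  ring

theorem mul_logb_two_div_le (k : ℕ) {c : ℝ} (hc : 0 ≤ c) : c * logb 2 k / k ≤ c := by
  rcases k.eq_zero_or_pos with rfl | hk
  · simpa using hc
  rw [div_le_iff₀ (by exact_mod_cast hk)]
  exact mul_le_mul_of_nonneg_left (logb_two_le_self k) hc

theorem thresholdDeviation_bounds {c ε α : ℝ} {k : ℕ} (hk : 2 ≤ k) (hc0 : 0 < c)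
    (hc : c < 1 / 8) (hε : 0 < ε) (hα : α = c * logb 2 k / k)
    (hgt : 2 ^ k * (1 - α) ^ (2 * k) > (1 + ε) / ε) :
    0 < thresholdDeviation k α ∧ thresholdDeviation k α < 1
      ∧ ((1 + ε) ^ 2 * (k : ℝ) ^ (8 * c))⁻¹ ≤ thresholdDeviation k α ^ 2 := by
  have hα0 : 0 < α := by
    rw [hα]
    exact div_pos (mul_pos hc0 (logb_pos one_lt_two (by exact_mod_cast hk))) (by positivity)
  have hα1 : α ≤ 1 / 8 := (hα ▸ mul_logb_two_div_le k hc0.le).trans hc.le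
  set β := (1 - α) ^ (2 * k)
  have hβ0 : 0 < β := pow_pos (by linarith) _
  have hβ1 : β < 1 := pow_lt_one₀ (by linarith) (by linarith) (by omega)
  have hK : (1 : ℝ) < 2 ^ k := one_lt_pow₀ one_lt_two (by omega)
  rw [gt_iff_lt, div_lt_iff₀ hε] at hgt
  have hδβ : β / (1 + ε) ≤ thresholdDeviation k α := by
    rw [thresholdDeviation, div_le_div_iff₀ (by linarith) (by linarith)]
    nlinarith
  refine ⟨(div_pos hβ0 (by positivity)).trans_le hδβ, ?_, ?_⟩
  · rw [thresholdDeviation, div_lt_one (by linarith)]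
    nlinarith
  calc ((1 + ε) ^ 2 * (k : ℝ) ^ (8 * c))⁻¹ = (k : ℝ) ^ (-(8 * c)) / (1 + ε) ^ 2 := by
        rw [rpow_neg (Nat.cast_nonneg k)]; field_simp
    _ ≤ (1 - α) ^ (4 * k) / (1 + ε) ^ 2 := by
        gcongr; exact rpow_neg_le_one_sub_pow (by omega) hc0.le hα hα0.le hα1
    _ = (β / (1 + ε)) ^ 2 := by rw [div_pow, ← pow_mul]; ring_nf
    _ ≤ thresholdDeviation k α ^ 2 := by gcongr

theorem mul_log_le_of_mul_log_sq_le {c ε α : ℝ} {k n t : ℕ} (hk : 0 < k) (hε : 0 < ε)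
    (hK : 16 * c * (1 + ε) ^ 2 / log 2 ^ 2 * log k ^ 2 * (k : ℝ) ^ (8 * c) ≤ k)
    (hα : α = c * logb 2 k / k) (ht : (t : ℝ) = α * n) :
    t * log k ≤ log 2 * n / (16 * ((1 + ε) ^ 2 * (k : ℝ) ^ (8 * c))) := by
  have hk' : (0 : ℝ) < k := by exact_mod_cast hk
  have hl2 : 0 < log 2 := log_pos one_lt_two
  have hK' : 16 * c * (1 + ε) ^ 2 * log k ^ 2 * (k : ℝ) ^ (8 * c) ≤ log 2 ^ 2 * k :=
    calc _ = log 2 ^ 2 * (16 * c * (1 + ε) ^ 2 / log 2 ^ 2 * log k ^ 2 * (k : ℝ) ^ (8 * c)) := by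
          field_simp
      _ ≤ _ := by gcongr
  rw [ht, hα, logb, le_div_iff₀ (by positivity)]
  calc c * (log k / log 2) / k * n * log k * (16 * ((1 + ε) ^ 2 * (k : ℝ) ^ (8 * c)))
      = n / (k * log 2) * (16 * c * (1 + ε) ^ 2 * log k ^ 2 * (k : ℝ) ^ (8 * c)) := by
        field_simp
    _ ≤ n / (k * log 2) * (log 2 ^ 2 * k) := by gcongr
    _ = log 2 * n := by field_simp

theorem exp_neg_mul_pow_le_two_rpow {k n t : ℕ} (hk : 0 < k) {μ δ D : ℝ}
    (hδ : D⁻¹ ≤ δ ^ 2) (hμ : 3 / 4 * log 2 * n ≤ μ)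
    (ht : t * log k ≤ log 2 * n / (16 * D)) :
    exp (-(μ * δ ^ 2 / 4)) * (k : ℝ) ^ t ≤ 2 ^ (-(n : ℝ) / (8 * D)) := by
  have hl2 : 0 < log 2 := log_pos one_lt_two
  rw [← exp_log (pow_pos (by exact_mod_cast hk : (0 : ℝ) < k) t), ← exp_add, log_pow,
    rpow_def_of_pos two_pos, exp_le_exp]
  have h1 : log 2 * n / D ≤ log 2 * n * δ ^ 2 := by
    rw [div_eq_mul_inv]; gcongr
  have h2 : log 2 * n * δ ^ 2 * (3 / 4) ≤ μ * δ ^ 2 := by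
    nlinarith [sq_nonneg δ]
  have e1 : log 2 * n / (16 * D) = log 2 * n / D / 16 := by ring
  have e2 : log 2 * (-(n : ℝ) / (8 * D)) = -(log 2 * n / D / 8) := by ring
  rw [e1] at ht
  rw [e2]
  linarith

theorem natCeil_mul_div_le {n t k : ℕ} (hn : 0 < n) (ht : t ≤ n) (hk : 0 < k) {e r : ℝ}
    (he : 0 ≤ e) (her : e * (k : ℝ) ^ t ≤ r) :
    ⌈(n : ℝ) ^ 2 * 2 ^ n / n.choose t⌉₊ * e
        / (4 * (n : ℝ) ^ 3 * 2 ^ n / (n.choose t * (k : ℝ) ^ t)) ≤ 2 * r := by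
  have hC : (0 : ℝ) < n.choose t := by exact_mod_cast Nat.choose_pos ht
  have hC2 : (n.choose t : ℝ) ≤ 2 ^ n := by exact_mod_cast Nat.choose_le_two_pow n t
  have hn' : (1 : ℝ) ≤ n := by exact_mod_cast hn
  have hx : 2⁻¹ ≤ (n : ℝ) ^ 2 * 2 ^ n / n.choose t := by
    rw [le_div_iff₀ hC]
    nlinarith [one_le_pow₀ hn' (n := 2)]
  calc ⌈(n : ℝ) ^ 2 * 2 ^ n / n.choose t⌉₊ * e
        / (4 * (n : ℝ) ^ 3 * 2 ^ n / (n.choose t * (k : ℝ) ^ t))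
      ≤ 2 * ((n : ℝ) ^ 2 * 2 ^ n / n.choose t) * e
        / (4 * (n : ℝ) ^ 3 * 2 ^ n / (n.choose t * (k : ℝ) ^ t)) := by
        gcongr
        exact Nat.ceil_le_two_mul hx
    _ = e * (k : ℝ) ^ t / (2 * n) := by
        field_simp
        ring
    _ ≤ 2 * r := by
        have hr : 0 ≤ r := (mul_nonneg he (by positivity)).trans her
        rw [div_le_iff₀ (by positivity)]
        nlinarith

/-- For constants `0 < c < 1/8` and `ε > 0`, there exists `k₀` such that for
all `k ≥ k₀`, with `α = c·log₂(k)/k`, whenever `2^k(1−α)^{2k} > (1+ε)/ε` and `αn` is a positive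
integer, for `m = (ln 2·2^k − γ)n` with `γ ∈ [0, ln 2·2^k/4]`:  drawing `φ` uniformly among
formulas with `m` clauses and `c_s = ⌈n²2ⁿ/C(n,αn)⌉` i.i.d. uniform assignments, with
probability at least `1 − 2·2^{−n/(8(1+ε)²k^{8c})}` the number of sampled assignments `v` with
`NumClausesSAT(φ,v) ≥ (1−(1−(1−α)^{2k})/(2^k−1))m` is at most `4n³2ⁿ/(C(n,αn)·k^{αn})`. -/
theorem set_size_bound_our_alpha (c ε : ℝ) (hc0 : 0 < c) (hc : c < 1 / 8) (hε : 0 < ε) :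
    ∃ k₀ : ℕ, ∀ k : ℕ, k₀ ≤ k →
      ∀ α : ℝ, α = c * Real.logb 2 k / k →
        2 ^ k * (1 - α) ^ (2 * k) > (1 + ε) / ε →
          ∀ n : ℕ, 0 < n → ∀ t : ℕ, 0 < t → (t : ℝ) = α * n →
            ∀ γ : ℝ, 0 ≤ γ → γ ≤ Real.log 2 * 2 ^ k / 4 →
              ∀ m : ℕ, (m : ℝ) = (Real.log 2 * 2 ^ k - γ) * n →
    let T : ℝ := (1 - (1 - (1 - α) ^ (2 * k)) / (2 ^ k - 1)) * m
    let cs : ℕ := ⌈((n : ℝ) ^ 2 * 2 ^ n) / (n.choose t : ℝ)⌉₊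
    (((univ : Finset (Formula n k m × (Fin cs → Assignment n))).filter fun p =>
        (((univ : Finset (Fin cs)).filter fun i =>
            T ≤ (numSat p.1 (p.2 i) : ℝ)).card : ℝ)
          ≤ 4 * (n : ℝ) ^ 3 * 2 ^ n / ((n.choose t : ℝ) * (k : ℝ) ^ t)).card : ℝ)
      / (Fintype.card (Formula n k m × (Fin cs → Assignment n)) : ℝ)
      ≥ 1 - 2 * (2 : ℝ) ^ (-(n : ℝ) / (8 * (1 + ε) ^ 2 * (k : ℝ) ^ (8 * c))) := by
  obtain ⟨k₀, hk₀⟩ := eventually_atTop.1 <| (tendsto_natCast_atTop_atTop.eventually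
    (eventually_mul_log_sq_mul_rpow_le (C := 16 * c * (1 + ε) ^ 2 / log 2 ^ 2)
      (by positivity) (by linarith : 8 * c < 1))).and (eventually_ge_atTop 2)
  refine ⟨k₀, fun k hk α hα hgt n hn t _ htα γ _ hγ m hm => ?_⟩
  obtain ⟨hK, hk2⟩ := hk₀ k hk
  intro T cs
  obtain ⟨hδ0, hδ1, hδ2⟩ := thresholdDeviation_bounds hk2 hc0 hc hε hα hgt
  have hμ : 3 / 4 * log 2 * n ≤ m / 2 ^ k := by
    rw [hm, le_div_iff₀ (by positivity)]; nlinarith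
  have htn : t ≤ n := by
    have := hα ▸ mul_logb_two_div_le k hc0.le
    exact_mod_cast (show (t : ℝ) ≤ n by rw [htα]; nlinarith)
  have hB : 0 < 4 * (n : ℝ) ^ 3 * 2 ^ n / ((n.choose t : ℝ) * (k : ℝ) ^ t) :=
    div_pos (by positivity) (mul_pos (by exact_mod_cast Nat.choose_pos htn) (by positivity))
  have hgood := le_card_filter_card_filter_le (ι := Fin cs) (fun φ v => T ≤ (numSat φ v : ℝ))
    hB fun v => threshold_eq (k := k) (by omega) α m ▸ card_numSat_ge_le_exp hn v hδ0 hδ1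
  have hcs := natCeil_mul_div_le hn htn (by omega) (exp_pos _).le <|
    exp_neg_mul_pow_le_two_rpow (by omega) hδ2 hμ <|
      mul_log_le_of_mul_log_sq_le (by omega) hε hK hα htα
  rw [Fintype.card_fin] at hgood
  have : Nonempty (Formula n k m × (Fin cs → Assignment n)) :=
    ⟨(fun _ _ => (⟨0, hn⟩, true), fun _ _ => true)⟩
  rw [ge_iff_le, le_div_iff₀ (Nat.cast_pos.2 Fintype.card_pos), mul_assoc 8]
  exact le_trans (by gcongr) hgood
end

section
/- Suppose m ≥ (2^k·ln 2 − c)·n for some real constant c. Let p_sat > 0 be the probability that a formula drawn from D_R(m,n,k) is satisfiable. Let S be any set of satisfiable formulas with exactly m clauses and k literals per clause, and let p_γ ∈ [0,1]. If Pr_{(φ,a) ∼ D_pa(m,n,k)}[φ ∈ S] ≤ p_γ, then Pr_{φ ∼ D_S(m,n,k)}[φ ∈ S] ≤ p_γ · e^{cn/2^k} / p_sat. -/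
/-
Every formula in `S` has a satisfying assignment, so `|S|` is at most the number of planted pairs
`(φ, a)` with `φ ∈ S`, hence at most `p_γ` times the number of all planted pairs. An assignment
satisfies exactly `(2n)^k - n^k` clauses, so there are `2^n ((2n)^k (1 - 2^{-k}))^m` planted pairs;
by `1 - x ≤ e^{-x}` and the lower bound on `m`, `2^n (1 - 2^{-k})^m ≤ e^{cn/2^k}`. Dividing by the
number `p_sat (2n)^{km}` of satisfiable formulas gives the bound.
-/

open scoped Classical
open Finset

section Counting

variable {n k : ℕ}

lemma card_falsifiedLiteral (a : Assignment n) :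
    Fintype.card {l : Fin n × Bool // a l.1 ≠ l.2} = n := by
  rw [Fintype.card_congr (Equiv.subtypeProdEquivSigmaSubtype fun i b => a i ≠ b),
    Fintype.card_sigma]
  simp

lemma not_satClause_iff (a : Assignment n) (c : Clause n k) :
    ¬ SatClause a c ↔ ∀ i, a (c i).1 ≠ (c i).2 := by
  simp [SatClause]

lemma card_falsifiedClause (a : Assignment n) :
    Fintype.card {c : Clause n k // ¬ SatClause a c} = n ^ k := by
  rw [Fintype.card_congr ((Equiv.subtypeEquivRight (not_satClause_iff a)).trans
      (Equiv.subtypePiEquivPi (p := fun _ (l : Fin n × Bool) => a l.1 ≠ l.2))),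
    Fintype.card_fun, card_falsifiedLiteral, Fintype.card_fin]

lemma card_satClause (a : Assignment n) :
    Fintype.card {c : Clause n k // SatClause a c} = (2 * n) ^ k - n ^ k := by
  have hcard : Fintype.card (Clause n k) = (2 * n) ^ k := by simp [mul_comm]
  rw [← hcard, ← card_falsifiedClause a, Fintype.card_subtype_compl,
    Nat.sub_sub_self (Fintype.card_subtype_le _)]

lemma card_satFormula (m : ℕ) (a : Assignment n) :
    (univ.filter fun φ : Formula n k m => SatFormula a φ).card = ((2 * n) ^ k - n ^ k) ^ m := by
  have e : {φ : Formula n k m // SatFormula a φ} ≃ (Fin m → {c : Clause n k // SatClause a c}) :=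
    (Equiv.subtypeEquivRight fun _ => Iff.rfl).trans Equiv.subtypePiEquivPi
  rw [← Fintype.card_subtype, Fintype.card_congr e, Fintype.card_fun, card_satClause,
    Fintype.card_fin]

lemma card_satPairs (m : ℕ) :
    (univ.filter fun p : Formula n k m × Assignment n => SatFormula p.2 p.1).card
      = 2 ^ n * ((2 * n) ^ k - n ^ k) ^ m := by
  rw [Finset.card_filter, Fintype.sum_prod_type_right]
  simp only [← Finset.card_filter, card_satFormula, sum_const, card_univ, smul_eq_mul]
  rw [Fintype.card_fun, Fintype.card_bool, Fintype.card_fin]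

end Counting

lemma two_pow_mul_one_sub_inv_pow_le_exp {n k m : ℕ} {c : ℝ}
    (hm : (2 ^ k * Real.log 2 - c) * n ≤ m) :
    (2 : ℝ) ^ n * (1 - (2 ^ k)⁻¹) ^ m ≤ Real.exp (c * n / 2 ^ k) := by
  set x : ℝ := (2 ^ k)⁻¹
  have hx : (2 : ℝ) ^ k * x = 1 := mul_inv_cancel₀ (by positivity)
  have hx1 : x ≤ 1 := inv_le_one_of_one_le₀ (one_le_pow₀ one_le_two)
  calc (2 : ℝ) ^ n * (1 - x) ^ m
      ≤ Real.exp (n * Real.log 2) * Real.exp (-x) ^ m := by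
        rw [Real.exp_nat_mul, Real.exp_log two_pos]
        gcongr
        exact Real.one_sub_le_exp_neg x
    _ = Real.exp (n * Real.log 2 - m * x) := by
        rw [← Real.exp_nat_mul, ← Real.exp_add, mul_neg, sub_eq_add_neg]
    _ ≤ Real.exp (c * n / 2 ^ k) := by
        gcongr
        change _ ≤ c * n * x
        linear_combination x * hm - (n * Real.log 2) * hx

lemma card_satPairs_le_exp_mul_card {n k m : ℕ} {c : ℝ}
    (hm : (2 ^ k * Real.log 2 - c) * n ≤ m) :
    ((univ.filter fun p : Formula n k m × Assignment n => SatFormula p.2 p.1).card : ℝ)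
      ≤ Real.exp (c * n / 2 ^ k) * Fintype.card (Formula n k m) := by
  have hcard : Fintype.card (Formula n k m) = ((2 * n) ^ k) ^ m := by simp [mul_comm]
  have hsub : (((2 * n) ^ k - n ^ k : ℕ) : ℝ) = (2 * n : ℝ) ^ k * (1 - (2 ^ k)⁻¹) := by
    rw [Nat.cast_sub (Nat.pow_le_pow_left (by omega) k)]
    push_cast
    field_simp
    ring
  rw [card_satPairs, hcard]
  push_cast
  rw [hsub, mul_pow, mul_left_comm, mul_comm (Real.exp _)]
  exact mul_le_mul_of_nonneg_left (two_pow_mul_one_sub_inv_pow_le_exp hm) (by positivity)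

lemma card_le_card_filter_prod {α β : Type*} [Fintype α] [Fintype β] [DecidableEq α]
    {R : α → β → Prop} {S : Finset α} (hS : ∀ x ∈ S, ∃ y, R x y) :
    S.card ≤ (univ.filter fun p : α × β => R p.1 p.2 ∧ p.1 ∈ S).card :=
  card_le_card_of_surjOn Prod.fst fun x hx => by
    obtain ⟨y, hy⟩ := hS x hx
    exact ⟨(x, y), mem_filter.2 ⟨mem_univ _, hy, hx⟩, rfl⟩

lemma le_mul_of_div_le_of_le {𝕜 : Type*} [Field 𝕜] [LinearOrder 𝕜] [IsStrictOrderedRing 𝕜]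
    {a b p : 𝕜} (hab : a ≤ b) (hb : 0 ≤ b) (h : a / b ≤ p) : a ≤ p * b := by
  rcases hb.eq_or_lt with rfl | hb
  · simpa using hab
  · exact (div_le_iff₀ hb).mp h

theorem planted_to_satisfiable_at_threshold_general (n k m : ℕ)
    (c : ℝ) (hmge : (2 ^ k * Real.log 2 - c) * n ≤ (m : ℝ))
    (psat : ℝ)
    (hpsat : psat = (((univ : Finset (Formula n k m)).filter fun φ =>
        ∃ a : Assignment n, SatFormula a φ).card : ℝ) / (Fintype.card (Formula n k m) : ℝ))
    (S : Finset (Formula n k m)) (hsat : ∀ φ ∈ S, ∃ a : Assignment n, SatFormula a φ)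
    (pγ : ℝ) (hpγ0 : 0 ≤ pγ)
    (hplanted :
      ((((univ : Finset (Formula n k m × Assignment n)).filter fun p =>
          SatFormula p.2 p.1 ∧ p.1 ∈ S).card : ℝ)
        / (((univ : Finset (Formula n k m × Assignment n)).filter fun p =>
          SatFormula p.2 p.1).card : ℝ)) ≤ pγ) :
    (S.card : ℝ) / (((univ : Finset (Formula n k m)).filter fun φ =>
        ∃ a : Assignment n, SatFormula a φ).card : ℝ)
      ≤ pγ * Real.exp (c * n / 2 ^ k) / psat := by
  set planted := (univ : Finset (Formula n k m × Assignment n)).filter fun p => SatFormula p.2 p.1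
  set plantedInS := (univ : Finset (Formula n k m × Assignment n)).filter fun p =>
    SatFormula p.2 p.1 ∧ p.1 ∈ S
  have hS : (S.card : ℝ) ≤ pγ * Real.exp (c * n / 2 ^ k) * Fintype.card (Formula n k m) :=
    calc (S.card : ℝ) ≤ plantedInS.card := Nat.cast_le.2 (card_le_card_filter_prod hsat)
      _ ≤ pγ * planted.card :=
        le_mul_of_div_le_of_le (mod_cast card_le_card (monotone_filter_right _ fun _ _ h => h.1))
          (Nat.cast_nonneg _) hplanted
      _ ≤ pγ * (Real.exp (c * n / 2 ^ k) * Fintype.card (Formula n k m)) :=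
        mul_le_mul_of_nonneg_left (card_satPairs_le_exp_mul_card hmge) hpγ0
      _ = pγ * Real.exp (c * n / 2 ^ k) * Fintype.card (Formula n k m) := (mul_assoc ..).symm
  rw [hpsat, div_div_eq_mul_div]
  exact div_le_div_of_nonneg_right hS (Nat.cast_nonneg _)

/-- Suppose `m ≥ (2^k·ln 2 − c)n` for a real constant `c`.  Let `p_sat > 0`
be the probability that a uniformly random formula with `m` clauses is satisfiable.  Let `S`
be any set of satisfiable formulas with `m` clauses and `p_γ ∈ [0,1]`.  If, for `(φ,a)` drawn
uniformly among pairs of a formula and a satisfying assignment, `Pr[φ ∈ S] ≤ p_γ`, then for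
`φ` drawn uniformly among satisfiable formulas, `Pr[φ ∈ S] ≤ p_γ·e^{cn/2^k}/p_sat`. -/
theorem planted_to_satisfiable_at_threshold (n k m : ℕ) (hn : 0 < n) (hk : 0 < k) (hm : 0 < m)
    (c : ℝ) (hmge : (2 ^ k * Real.log 2 - c) * n ≤ (m : ℝ))
    (psat : ℝ)
    (hpsat : psat = (((univ : Finset (Formula n k m)).filter fun φ =>
        ∃ a : Assignment n, SatFormula a φ).card : ℝ) / (Fintype.card (Formula n k m) : ℝ))
    (hpsat0 : 0 < psat)
    (S : Finset (Formula n k m)) (hsat : ∀ φ ∈ S, ∃ a : Assignment n, SatFormula a φ)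
    (pγ : ℝ) (hpγ0 : 0 ≤ pγ) (hpγ1 : pγ ≤ 1)
    (hplanted :
      ((((univ : Finset (Formula n k m × Assignment n)).filter fun p =>
          SatFormula p.2 p.1 ∧ p.1 ∈ S).card : ℝ)
        / (((univ : Finset (Formula n k m × Assignment n)).filter fun p =>
          SatFormula p.2 p.1).card : ℝ)) ≤ pγ) :
    (S.card : ℝ) / (((univ : Finset (Formula n k m)).filter fun φ =>
        ∃ a : Assignment n, SatFormula a φ).card : ℝ)
      ≤ pγ * Real.exp (c * n / 2 ^ k) / psat :=
  planted_to_satisfiable_at_threshold_general n k m c hmge psat hpsat S hsat pγ hpγ0 hplanted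
end
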